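/- arXiv:1302.0298 — 2 statements merged into one kernel-verified Lean document; each statement's English description precedes it below -/
import Mathlib

section
/- For every prime number p > 5 there exist a positive integer e and natural numbers i, j with i < p^e − 1 and j < p^e − 1 such that, setting a₁ = ⌈(p^e−1)·(1/3)⌉ and a₂ = a₃ = ⌈(p^e−1)·(3/4)⌉, the coefficient of x^i y^j in the polynomial x^{a₁} · y^{a₂} · (x+y)^{a₃} of 𝔽_p[x,y] is nonzero. -/
/-!
Take `e = 2`. Since `p² ≡ 1 (mod 12)`, write `p² - 1 = 12n`; the ceilings are then exactly
`4n`, `9n`, `9n`, and the coefficient of `x^(4n+k) y^(18n-k)` is `C(9n, k)`; both exponents are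
below `12n` exactly when `6n < k < 8n`. Writing `p = 2m + 1`, the choice `k = p(m+1)` fits, and by
Lucas's theorem `C(9n, p(m+1)) ≡ C(⌊9n/p⌋, m+1) (mod p)`, which is a unit since `⌊9n/p⌋ < p`.
-/

open MvPolynomial

theorem coeff_X_add_X_pow {R : Type*} [CommSemiring R] {c k : ℕ} (hk : k ≤ c) :
    coeff (Finsupp.single 0 k + Finsupp.single 1 (c - k))
      ((X 0 + X 1 : MvPolynomial (Fin 2) R) ^ c) = c.choose k := by
  have hterm (r : ℕ) : (X 0 : MvPolynomial (Fin 2) R) ^ r * X 1 ^ (c - r) *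
      (c.choose r : MvPolynomial (Fin 2) R) =
      monomial (Finsupp.single 0 r + Finsupp.single 1 (c - r)) (c.choose r : R) := by
    rw [← C_eq_coe_nat, C_apply, X_pow_eq_monomial, X_pow_eq_monomial, monomial_mul,
      monomial_mul, mul_one, one_mul, add_zero]
  simp only [add_pow, coeff_sum, hterm, coeff_monomial]
  rw [Finset.sum_eq_single k]
  · simp
  · intro r _ hrk
    refine if_neg fun h => hrk ?_
    simpa using DFunLike.congr_fun h 0
  · exact fun h => absurd (Finset.mem_range.mpr (Nat.lt_succ_of_le hk)) h

theorem coeff_X_pow_mul_X_pow_mul_X_add_X_pow {R : Type*} [CommSemiring R] (a b : ℕ) {c k : ℕ}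
    (hk : k ≤ c) :
    coeff (Finsupp.single 0 (a + k) + Finsupp.single 1 (b + (c - k)))
      ((X 0 : MvPolynomial (Fin 2) R) ^ a * X 1 ^ b * (X 0 + X 1) ^ c) = (c.choose k : R) := by
  have hsplit : Finsupp.single (0 : Fin 2) (a + k) + Finsupp.single 1 (b + (c - k)) =
      (Finsupp.single 0 a + Finsupp.single 1 b) +
        (Finsupp.single 0 k + Finsupp.single 1 (c - k)) := by
    simp only [Finsupp.single_add]
    abel
  rw [hsplit, X_pow_eq_monomial, X_pow_eq_monomial, monomial_mul, mul_one, coeff_monomial_mul,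
    one_mul, coeff_X_add_X_pow hk]

theorem natCast_choose_prime_mul_ne_zero {p N k : ℕ} [hp : Fact p.Prime] (hN : N < p ^ 2)
    (hk : p * k ≤ N) : (N.choose (p * k) : ZMod p) ≠ 0 := by
  have hlucas := Choose.choose_modEq_choose_mod_mul_choose_div_nat (n := N) (k := p * k) (p := p)
  rw [Nat.mul_mod_right, Nat.mul_div_cancel_left _ hp.out.pos, Nat.choose_zero_right,
    one_mul] at hlucas
  rw [(ZMod.natCast_eq_natCast_iff _ _ _).mpr hlucas, ne_eq, ZMod.natCast_eq_zero_iff]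
  have hdiv : N / p < p := Nat.div_lt_of_lt_mul (by rwa [← sq])
  have hkN : k ≤ N / p := (Nat.le_div_iff_mul_le hp.out.pos).mpr (by linarith)
  exact hp.out.coprime_iff_not_dvd.mp (hp.out.coprime_choose_of_lt hdiv hkN)

theorem sq_mod_twelve_of_not_two_dvd_of_not_three_dvd {p : ℕ} (h2 : ¬ 2 ∣ p) (h3 : ¬ 3 ∣ p) :
    p ^ 2 % 12 = 1 := by
  have hr : p % 12 = 1 ∨ p % 12 = 5 ∨ p % 12 = 7 ∨ p % 12 = 11 := by omega
  rw [Nat.pow_mod]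
  rcases hr with h | h | h | h <;> rw [h]

/-- Proposition 3.8, Case 2: Fedder's criterion for `(ℙ¹, (1/3)P₁+(3/4)P₂+(3/4)P₃)`
in characteristic `p > 5`. -/
theorem stmt_5 (p : ℕ) (hp : p.Prime) (h5 : 5 < p) :
    ∃ e : ℕ, 0 < e ∧ ∃ i j : ℕ, i < p ^ e - 1 ∧ j < p ^ e - 1 ∧
      MvPolynomial.coeff (Finsupp.single 0 i + Finsupp.single 1 j)
        ((X 0 : MvPolynomial (Fin 2) (ZMod p)) ^ ⌈((p ^ e : ℚ) - 1) * (1 / 3)⌉₊ *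
          X 1 ^ ⌈((p ^ e : ℚ) - 1) * (3 / 4)⌉₊ *
          (X 0 + X 1) ^ ⌈((p ^ e : ℚ) - 1) * (3 / 4)⌉₊) ≠ 0 := by
  have : Fact p.Prime := ⟨hp⟩
  have hnot_dvd {q : ℕ} (hq : q.Prime) (hqp : q < p) : ¬ q ∣ p := fun h =>
    hqp.ne ((Nat.prime_dvd_prime_iff_eq hq hp).mp h)
  obtain ⟨n, hn⟩ : ∃ n, p ^ 2 = 12 * n + 1 :=
    ⟨p ^ 2 / 12, by
      have := sq_mod_twelve_of_not_two_dvd_of_not_three_dvd (hnot_dvd Nat.prime_two (by omega))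
        (hnot_dvd Nat.prime_three (by omega))
      omega⟩
  obtain ⟨m, hm⟩ : ∃ m, p = 2 * m + 1 :=
    ⟨p / 2, by have := hnot_dvd Nat.prime_two (by omega); omega⟩
  have hk9 : p * (m + 1) ≤ 9 * n := by subst hm; nlinarith
  have hk8 : p * (m + 1) < 8 * n := by subst hm; nlinarith
  have hk6 : 6 * n < p * (m + 1) := by subst hm; nlinarith
  have hq : (p : ℚ) ^ 2 = 12 * n + 1 := by exact_mod_cast hn
  have hceil (a : ℚ) (b : ℕ) (hab : 12 * a = b) : ⌈((p : ℚ) ^ 2 - 1) * a⌉₊ = b * n := by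
    rw [hq, show (12 * (n : ℚ) + 1 - 1) * a = ((b * n : ℕ) : ℚ) by push_cast; rw [← hab]; ring,
      Nat.ceil_natCast]
  refine ⟨2, two_pos, 4 * n + p * (m + 1), 9 * n + (9 * n - p * (m + 1)), by omega, by omega, ?_⟩
  rw [hceil _ 4 (by norm_num), hceil _ 9 (by norm_num),
    coeff_X_pow_mul_X_pow_mul_X_add_X_pow _ _ hk9]
  exact natCast_choose_prime_mul_ne_zero (by omega) hk9
end

section
/- For every prime number p ≥ 13 there exist natural numbers i, j with i < p − 1 and j < p − 1 such that, setting a₁ = ⌈(p−1)·(1/3)⌉ and a₂ = a₃ = ⌈(p−1)·(3/4)⌉, the coefficient of x^i y^j in the polynomial x^{a₁} · y^{a₂} · (x+y)^{a₃} of 𝔽_p[x,y] is nonzero. -/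
open MvPolynomial

/-!
The coefficient of `x^(a+m) y^(b+c-m)` in `x^a y^b (x+y)^c` is `C(c, m)`, which is a unit mod `p`
as soon as `c < p`. Taking `m = b + c + 2 - p` puts the `y`-exponent at `p - 2` and the
`x`-exponent at `a + b + c + 2 - p`, which is below `p - 1` exactly when `a + b + c + 4 ≤ 2p`.
For the weights `1/3, 3/4, 3/4` this inequality holds for every prime `p ≥ 13`.
-/

theorem Nat.ceil_natCast_div_natCast {K : Type*} [Semifield K] [LinearOrder K]
    [IsStrictOrderedRing K] [FloorSemiring K] {d : ℕ} (hd : 0 < d) (m : ℕ) :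
    ⌈(m / d : K)⌉₊ = m ⌈/⌉ d :=
  eq_of_forall_ge_iff fun c => by
    rw [Nat.ceil_le, div_le_iff₀ (by exact_mod_cast hd), ceilDiv_le_iff_le_mul hd, mul_comm]
    exact_mod_cast Iff.rfl

theorem Nat.ceil_natCast_sub_one_mul_div {p : ℕ} (hp : 1 ≤ p) (r : ℕ) {d : ℕ} (hd : 0 < d) :
    ⌈((p : ℚ) - 1) * (r / d)⌉₊ = r * (p - 1) ⌈/⌉ d := by
  rw [← Nat.ceil_natCast_div_natCast (K := ℚ) hd]
  push_cast [Nat.cast_sub hp]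
  ring_nf

section TwoVariables

variable {R : Type*} [CommSemiring R]

theorem MvPolynomial.coeff_X_zero_add_X_one_pow {k n : ℕ} (hk : k ≤ n) :
    coeff (Finsupp.single 0 k + Finsupp.single 1 (n - k))
      ((X 0 + X 1 : MvPolynomial (Fin 2) R) ^ n) = n.choose k := by
  have hterm (t : ℕ) : coeff (Finsupp.single 0 k + Finsupp.single 1 (n - k))
      ((X 0 : MvPolynomial (Fin 2) R) ^ t * X 1 ^ (n - t) * (n.choose t : MvPolynomial (Fin 2) R))
      = if t = k then (n.choose k : R) else 0 := by
    rw [X_pow_eq_monomial, X_pow_eq_monomial, monomial_mul, one_mul, ← C_eq_coe_nat, mul_comm,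
      coeff_C_mul, coeff_monomial]
    by_cases h : t = k
    · simp [h]
    · rw [if_neg, if_neg h, mul_zero]
      intro hEq
      exact h (by simpa using DFunLike.congr_fun hEq 0)
  rw [add_pow, coeff_sum, Finset.sum_congr rfl fun t _ => hterm t, Finset.sum_ite_eq']
  simp [Nat.lt_succ_of_le hk]

theorem MvPolynomial.coeff_X_pow_mul_X_pow_mul_add_pow {a b k n : ℕ} (hk : k ≤ n) :
    coeff (Finsupp.single 0 (a + k) + Finsupp.single 1 (b + (n - k)))
      ((X 0 : MvPolynomial (Fin 2) R) ^ a * X 1 ^ b * (X 0 + X 1) ^ n) = (n.choose k : R) := by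
  have hsplit : (Finsupp.single 0 (a + k) + Finsupp.single 1 (b + (n - k)) : Fin 2 →₀ ℕ)
      = (Finsupp.single 0 a + Finsupp.single 1 b) +
          (Finsupp.single 0 k + Finsupp.single 1 (n - k)) := by
    rw [Finsupp.single_add, Finsupp.single_add]; abel
  rw [hsplit, X_pow_eq_monomial, X_pow_eq_monomial, monomial_mul, one_mul, coeff_monomial_mul,
    one_mul, coeff_X_zero_add_X_one_pow (R := R) hk]

theorem MvPolynomial.exists_coeff_X_pow_mul_X_pow_mul_add_pow_ne_zero {p : ℕ} [CharP R p]
    (hp : p.Prime) {a b c : ℕ} (ha : a + 2 ≤ p) (hb : b + 2 ≤ p) (hc : c < p)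
    (habc : a + b + c + 4 ≤ 2 * p) :
    ∃ i j : ℕ, i < p - 1 ∧ j < p - 1 ∧
      coeff (Finsupp.single 0 i + Finsupp.single 1 j)
        ((X 0 : MvPolynomial (Fin 2) R) ^ a * X 1 ^ b * (X 0 + X 1) ^ c) ≠ 0 := by
  have hm : b + c + 2 - p ≤ c := by omega
  refine ⟨a + (b + c + 2 - p), b + (c - (b + c + 2 - p)), by omega, by omega, ?_⟩
  rw [coeff_X_pow_mul_X_pow_mul_add_pow hm, Ne, CharP.cast_eq_zero_iff R p]
  exact (Nat.Prime.coprime_iff_not_dvd hp).1 (hp.coprime_choose_of_lt hc hm)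

end TwoVariables

/-- The `e = 1` case of Case 2 of Proposition 3.8. -/
theorem stmt_10 (p : ℕ) (hp : p.Prime) (hp' : 13 ≤ p) :
    ∃ i j : ℕ, i < p - 1 ∧ j < p - 1 ∧
      MvPolynomial.coeff (Finsupp.single 0 i + Finsupp.single 1 j)
        ((X 0 : MvPolynomial (Fin 2) (ZMod p)) ^ ⌈((p : ℚ) - 1) * (1 / 3)⌉₊ *
          X 1 ^ ⌈((p : ℚ) - 1) * (3 / 4)⌉₊ *
          (X 0 + X 1) ^ ⌈((p : ℚ) - 1) * (3 / 4)⌉₊) ≠ 0 := by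
  have ha : ⌈((p : ℚ) - 1) * (1 / 3)⌉₊ = (p + 1) / 3 := by
    have h := Nat.ceil_natCast_sub_one_mul_div hp.one_le 1 (d := 3) (by norm_num)
    push_cast at h
    rw [h, Nat.ceilDiv_eq_add_pred_div]
    omega
  have hb : ⌈((p : ℚ) - 1) * (3 / 4)⌉₊ = 3 * p / 4 := by
    have h := Nat.ceil_natCast_sub_one_mul_div hp.one_le 3 (d := 4) (by norm_num)
    push_cast at h
    rw [h, Nat.ceilDiv_eq_add_pred_div]
    omega
  have hmod (q : ℕ) (hq : 1 < q) (hqp : q < p) : p % q ≠ 0 := fun h =>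
    (hp.eq_one_or_self_of_dvd q (Nat.dvd_of_mod_eq_zero h)).elim (by omega) (by omega)
  -- fails for `p = 15`, so primality is needed beyond oddness
  have habc : (p + 1) / 3 + 2 * (3 * p / 4) + 4 ≤ 2 * p := by
    have := hmod 2 (by norm_num) (by omega)
    have := hmod 3 (by norm_num) (by omega)
    have : p % 12 = 1 ∨ p % 12 = 5 ∨ p % 12 = 7 ∨ p % 12 = 11 := by omega
    rcases this with h | h | h | h <;> omega
  rw [ha, hb]
  exact exists_coeff_X_pow_mul_X_pow_mul_add_pow_ne_zero hp (by omega) (by omega) (by omega)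
    (by omega)
end
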